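/- Let V be a category with small coproducts and with an initial object, and suppose condition (e1) holds: for every small family of morphisms (f_i : y_i → x_i)_{i∈I} and every i ∈ I, the square with top f_i : y_i → x_i, vertical coprojections y_i → ∐_{j∈I} y_j and x_i → ∐_{j∈I} x_j, and bottom ∐_{j∈I} f_j, is a pullback. Then coproducts in V are disjoint: for every small family (x_i)_{i∈I} and all i ≠ j, the square with vertex the initial object 0, the unique morphisms 0 → x_i, 0 → x_j, and the coprojections into ∐_{k∈I} x_k, is a pullback. -/
import Mathlib


open CategoryTheory CategoryTheory.Limits

universe v u

/-- Condition (e1): for every small family of morphisms `f i : y i ⟶ x i`, each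
square with top `f i`, vertical coprojections and bottom `∐ f` is a pullback. -/
def CondE1 (V : Type u) [Category.{v} V] [HasCoproducts.{v} V] : Prop :=
  ∀ ⦃I : Type v⦄ (y x : I → V) (f : ∀ i, y i ⟶ x i) (i : I),
    IsPullback (f i) (Sigma.ι y i) (Sigma.ι x i) (Limits.Sigma.map f)

/-- Coproducts are disjoint: the pullback of two distinct coprojections is the
initial object. -/
def DisjointCoproducts (V : Type u) [Category.{v} V] [HasCoproducts.{v} V]
    [HasInitial V] : Prop :=
  ∀ ⦃I : Type v⦄ (x : I → V) (i j : I), i ≠ j →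
    IsPullback (initial.to (x i)) (initial.to (x j)) (Sigma.ι x i) (Sigma.ι x j)

/-- Condition (e1) implies that coproducts are disjoint. -/
theorem disjoint_of_e1 (V : Type u) [Category.{v} V] [HasCoproducts.{v} V]
    [HasInitial V] (he1 : CondE1 V) : DisjointCoproducts V := by
  intro I x i j hij
  classical
  -- the family which is `x i` at `i` and initial elsewhere
  set z : I → V := fun k => if k = i then x i else ⊥_ V with hz
  have hzi : z i = x i := if_pos rfl
  have hzj : z j = ⊥_ V := if_neg (fun h => hij h.symm)
  have hzk : ∀ k, k ≠ i → IsInitial (z k) := fun k h => by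
    rw [show z k = ⊥_ V from if_neg h]; exact initialIsInitial
  set f : ∀ k, z k ⟶ x k := fun k =>
    dite (k = i) (fun h => eqToHom (by rw [show z k = x i from if_pos h, h]))
      (fun h => (hzk k h).to (x k)) with hf
  have hfi : f i = eqToHom hzi := by
    simp [hf]
  -- the coprojection `ι z i` is an isomorphism
  have hiso : IsIso (Sigma.ι z i) := by
    refine ⟨Sigma.desc (fun k =>
      dite (k = i) (fun h => eqToHom (by rw [h])) (fun h => (hzk k h).to (z i))), ?_, ?_⟩
    · simp
    · apply Sigma.hom_ext
      intro k
      by_cases h : k = i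
      · subst h; simp
      · exact (hzk k h).hom_ext _ _
  -- the square given by (e1) at index j
  have R : IsPullback (f j) (Sigma.ι z j) (Sigma.ι x j) (Limits.Sigma.map f) := he1 z x f j
  -- the left square, whose horizontal maps are isomorphisms
  have L : IsPullback (eqToHom hzj.symm) (initial.to (z i)) (Sigma.ι z j) (Sigma.ι z i) := by
    have : IsIso (Sigma.ι z i) := hiso
    exact IsPullback.of_horiz_isIso ⟨by
      have h1 : eqToHom hzj.symm ≫ Sigma.ι z j =
          (initial.to (z i) ≫ Sigma.ι z i : ⊥_ V ⟶ ∐ z) := initial.hom_ext _ _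
      exact h1⟩
  have big := (L.paste_horiz R).flip
  -- big : IsPullback (initial.to (z i)) (eqToHom hzj.symm ≫ f j)
  --         (Sigma.ι z i ≫ Sigma.map f) (Sigma.ι x j)
  refine big.of_iso (Iso.refl _) (eqToIso hzi) (Iso.refl _) (Iso.refl _) ?_ ?_ ?_ ?_
  · exact initial.hom_ext _ _
  · exact initial.hom_ext _ _
  · have : Sigma.ι z i ≫ Limits.Sigma.map f = f i ≫ Sigma.ι x i := by simp
    rw [Iso.refl_hom, Category.comp_id, this, hfi, eqToIso.hom]
  · simp
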